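/- (Convergence step of the merge-and-split theorem.) Suppose P is a strictly D_c-stable partition of N and Q is any partition of N with Q ≠ P. Then Q admits a value-increasing merge or split operation: either there exist two or more distinct blocks B_1, …, B_r of Q (r ≥ 2) with v(B_1 ∪ ⋯ ∪ B_r) > ∑_{j=1}^r v(B_j), or there exists a block B of Q and pairwise disjoint nonempty sets B_1, …, B_r (r ≥ 2) with B_1 ∪ ⋯ ∪ B_r = B and ∑_{j=1}^r v(B_j) > v(B). -/

import Mathlib

open Finset

variable {α : Type*} [Fintype α] [DecidableEq α]

/-- A partition of the player set `N`: a family of pairwise disjoint nonempty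
subsets whose union is `N`. -/
def IsPartition (P : Finset (Finset α)) : Prop :=
  (∀ B ∈ P, B.Nonempty) ∧ (P : Set (Finset α)).PairwiseDisjoint id ∧
    P.sup id = Finset.univ

/-- A collection in `N`: a family of pairwise disjoint nonempty subsets of `N`. -/
def IsCollection (C : Finset (Finset α)) : Prop :=
  (∀ B ∈ C, B.Nonempty) ∧ (C : Set (Finset α)).PairwiseDisjoint id

/-- The value of a collection (or partition): the sum of the values of its blocks. -/
def collVal (v : Finset α → ℝ) (C : Finset (Finset α)) : ℝ := ∑ B ∈ C, v B

/-- `S[P]`: the collection consisting of the nonempty sets among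
`(S_1 ∪ ⋯ ∪ S_k) ∩ P_j`, for the blocks `P_j` of `P`. -/
def restrictColl (C P : Finset (Finset α)) : Finset (Finset α) :=
  (P.image fun Pj => C.sup id ∩ Pj).filter fun B => B.Nonempty

/-- `P` is `D_c`-stable: `v(S[P]) ≥ v(S)` for every collection `S` in `N`. -/
def DcStable (v : Finset α → ℝ) (P : Finset (Finset α)) : Prop :=
  ∀ C : Finset (Finset α), IsCollection C →
    collVal v (restrictColl C P) ≥ collVal v C

/-- `P` is strictly `D_c`-stable: strict superadditivity for `P`-compatible
collections with at least two blocks, and strict gain from splitting any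
`P`-incompatible coalition along `P`. -/
def StrictlyDcStable (v : Finset α → ℝ) (P : Finset (Finset α)) : Prop :=
  (∀ C : Finset (Finset α), IsCollection C → 2 ≤ C.card →
      (∃ Pj ∈ P, C.sup id ⊆ Pj) → v (C.sup id) > ∑ B ∈ C, v B) ∧
  (∀ S : Finset α, (∀ Pj ∈ P, ¬ S ⊆ Pj) →
      (∑ Pj ∈ P.filter fun Pj => (S ∩ Pj).Nonempty, v (S ∩ Pj)) > v S)

/-!
If every block of `Q` lies inside a block of `P`, then, as `Q ≠ P`, some block of `P` contains
two or more blocks of `Q`; they form a `P`-compatible collection, so merging them is profitable.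
Otherwise some block `B` of `Q` is `P`-incompatible, and splitting it into its traces on the
blocks of `P` is profitable.
-/

theorem IsCollection.subset {β : Type*} {C D : Finset (Finset β)} (hC : IsCollection C)
    (h : D ⊆ C) : IsCollection D :=
  ⟨fun B hB => hC.1 B (h hB), hC.2.subset (coe_subset.mpr h)⟩

section Partition

variable {β : Type*} [Fintype β] [DecidableEq β] {P Q : Finset (Finset β)}

theorem IsPartition.isCollection (hP : IsPartition P) : IsCollection P :=
  ⟨hP.1, hP.2.1⟩

theorem IsPartition.exists_mem (hP : IsPartition P) (a : β) : ∃ B ∈ P, a ∈ B :=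
  mem_sup.mp (hP.2.2 ▸ mem_univ a)

theorem IsPartition.eq_of_subset (hQ : IsPartition Q) (hP : IsPartition P) (h : Q ⊆ P) :
    Q = P := by
  refine Subset.antisymm h fun Pj hPj => ?_
  obtain ⟨a, ha⟩ := hP.1 Pj hPj
  obtain ⟨B, hB, haB⟩ := hQ.exists_mem a
  rwa [hP.2.1.elim_finset hPj (h hB) a ha haB]

theorem IsPartition.exists_two_le_card_filter_subset_of_refines (hP : IsPartition P)
    (hQ : IsPartition Q) (href : ∀ B ∈ Q, ∃ Pj ∈ P, B ⊆ Pj) (hne : Q ≠ P) :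
    ∃ Pj ∈ P, 2 ≤ (Q.filter (· ⊆ Pj)).card := by
  obtain ⟨B, hBQ, hBP⟩ := not_subset.mp fun h => hne (hQ.eq_of_subset hP h)
  obtain ⟨Pj, hPj, hBPj⟩ := href B hBQ
  obtain ⟨a, haPj, haB⟩ := not_subset.mp fun h => hBP (Subset.antisymm hBPj h ▸ hPj)
  obtain ⟨B', hB'Q, haB'⟩ := hQ.exists_mem a
  obtain ⟨Pk, hPk, hB'Pk⟩ := href B' hB'Q
  obtain rfl : Pk = Pj := hP.2.1.elim_finset hPk hPj a (hB'Pk haB') haPj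
  exact ⟨Pk, hPk, one_lt_card.mpr ⟨B, mem_filter.mpr ⟨hBQ, hBPj⟩, B',
    mem_filter.mpr ⟨hB'Q, hB'Pk⟩, fun h => haB (h ▸ haB')⟩⟩

end Partition

section Restrict

variable {β : Type*} [DecidableEq β] {C P : Finset (Finset β)}

theorem isCollection_restrictColl (hP : (P : Set (Finset β)).PairwiseDisjoint id) :
    IsCollection (restrictColl C P) := by
  refine ⟨fun B hB => (mem_filter.mp hB).2, fun X hX Y hY hXY => ?_⟩
  obtain ⟨Pj, hPj, rfl⟩ := mem_image.mp (mem_filter.mp hX).1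
  obtain ⟨Pk, hPk, rfl⟩ := mem_image.mp (mem_filter.mp hY).1
  have hjk : Pj ≠ Pk := by rintro rfl; exact hXY rfl
  exact (hP hPj hPk hjk).mono inter_subset_right inter_subset_right

theorem sum_restrictColl (hP : (P : Set (Finset β)).PairwiseDisjoint id) (v : Finset β → ℝ) :
    ∑ B ∈ restrictColl C P, v B =
      ∑ Pj ∈ P.filter fun Pj => (C.sup id ∩ Pj).Nonempty, v (C.sup id ∩ Pj) := by
  rw [restrictColl, filter_image, sum_image]
  intro Pj hPj Pk hPk (h : C.sup id ∩ Pj = C.sup id ∩ Pk)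
  obtain ⟨a, ha⟩ := (mem_filter.mp hPj).2
  exact hP.elim_finset (mem_filter.mp hPj).1 (mem_filter.mp hPk).1 a (mem_inter.mp ha).2
    (mem_inter.mp (h ▸ ha)).2

variable [Fintype β]

theorem sup_restrictColl (hP : IsPartition P) : (restrictColl C P).sup id = C.sup id := by
  refine Subset.antisymm (Finset.sup_le fun X hX => ?_) fun a ha => ?_
  · obtain ⟨Pj, -, rfl⟩ := mem_image.mp (mem_filter.mp hX).1
    exact inter_subset_left
  · obtain ⟨Pj, hPj, haPj⟩ := hP.exists_mem a
    have ha' : a ∈ C.sup id ∩ Pj := mem_inter.mpr ⟨ha, haPj⟩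
    exact mem_sup.mpr ⟨_, mem_filter.mpr ⟨mem_image_of_mem _ hPj, a, ha'⟩, ha'⟩

theorem two_le_card_restrictColl (hP : IsPartition P) (hC : (C.sup id).Nonempty)
    (h : ∀ Pj ∈ P, ¬ C.sup id ⊆ Pj) : 2 ≤ (restrictColl C P).card := by
  have mem {x : β} {Pi : Finset β} (hPi : Pi ∈ P) (hx : x ∈ C.sup id) (hxPi : x ∈ Pi) :
      C.sup id ∩ Pi ∈ restrictColl C P :=
    mem_filter.mpr ⟨mem_image_of_mem _ hPi, x, mem_inter.mpr ⟨hx, hxPi⟩⟩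
  obtain ⟨a, ha⟩ := hC
  obtain ⟨Pj, hPj, haPj⟩ := hP.exists_mem a
  obtain ⟨b, hb, hbPj⟩ := not_subset.mp (h Pj hPj)
  obtain ⟨Pk, hPk, hbPk⟩ := hP.exists_mem b
  refine one_lt_card.mpr ⟨_, mem hPj ha haPj, _, mem hPk hb hbPk, fun heq => hbPj ?_⟩
  exact (mem_inter.mp (heq ▸ mem_inter.mpr ⟨hb, hbPk⟩)).2

end Restrict

namespace StrictlyDcStable

variable {β : Type*} [Fintype β] [DecidableEq β] {v : Finset β → ℝ} {P Q : Finset (Finset β)}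

theorem exists_merge (hstab : StrictlyDcStable v P) (hP : IsPartition P) (hQ : IsPartition Q)
    (href : ∀ B ∈ Q, ∃ Pj ∈ P, B ⊆ Pj) (hne : Q ≠ P) :
    ∃ T ⊆ Q, 2 ≤ T.card ∧ v (T.sup id) > ∑ B ∈ T, v B := by
  obtain ⟨Pj, hPj, hcard⟩ := hP.exists_two_le_card_filter_subset_of_refines hQ href hne
  refine ⟨Q.filter (· ⊆ Pj), filter_subset _ _, hcard,
    hstab.1 _ (hQ.isCollection.subset (filter_subset _ _)) hcard ⟨Pj, hPj, ?_⟩⟩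
  exact Finset.sup_le fun B hB => (mem_filter.mp hB).2

theorem exists_split (hstab : StrictlyDcStable v P) (hP : IsPartition P) {S : Finset β}
    (hS : S.Nonempty) (h : ∀ Pj ∈ P, ¬ S ⊆ Pj) :
    ∃ T : Finset (Finset β), IsCollection T ∧ 2 ≤ T.card ∧ T.sup id = S ∧
      ∑ B ∈ T, v B > v S := by
  have hsup : ({S} : Finset (Finset β)).sup id = S := sup_singleton
  refine ⟨restrictColl {S} P, isCollection_restrictColl hP.2.1,
    two_le_card_restrictColl hP (by rwa [hsup]) (by rwa [hsup]), (sup_restrictColl hP).trans hsup, ?_⟩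
  rw [sum_restrictColl hP.2.1, hsup]
  exact hstab.2 S h

end StrictlyDcStable

theorem strictlyDcStable_merge_or_split_general
    {α : Type*} [Fintype α] [DecidableEq α]
    (v : Finset α → ℝ)
    (P : Finset (Finset α)) (hP : IsPartition P) (hstab : StrictlyDcStable v P)
    (Q : Finset (Finset α)) (hQ : IsPartition Q) (hne : Q ≠ P) :
    (∃ T ⊆ Q, 2 ≤ T.card ∧ v (T.sup id) > ∑ B ∈ T, v B) ∨
      (∃ B ∈ Q, ∃ T : Finset (Finset α), IsCollection T ∧ 2 ≤ T.card ∧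
        T.sup id = B ∧ (∑ B' ∈ T, v B') > v B) := by
  by_cases href : ∀ B ∈ Q, ∃ Pj ∈ P, B ⊆ Pj
  · exact Or.inl (hstab.exists_merge hP hQ href hne)
  · obtain ⟨B, hBQ, hB⟩ : ∃ B ∈ Q, ∀ Pj ∈ P, ¬ B ⊆ Pj := by simpa using href
    exact Or.inr ⟨B, hBQ, hstab.exists_split hP (hQ.1 B hBQ) hB⟩

/-- convergence step of merge-and-split: if `P` is strictly `D_c`-stable
and `Q ≠ P` is any partition of `N`, then `Q` admits a value-increasing merge operation
(two or more blocks of `Q` whose union has strictly larger value) or a value-increasing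
split operation (a block of `Q` split into two or more pairwise disjoint nonempty sets
of strictly larger total value). -/
theorem strictlyDcStable_merge_or_split
    {α : Type*} [Fintype α] [DecidableEq α] [Nonempty α]
    (v : Finset α → ℝ) (hv0 : v ∅ = 0)
    (P : Finset (Finset α)) (hP : IsPartition P) (hstab : StrictlyDcStable v P)
    (Q : Finset (Finset α)) (hQ : IsPartition Q) (hne : Q ≠ P) :
    (∃ T ⊆ Q, 2 ≤ T.card ∧ v (T.sup id) > ∑ B ∈ T, v B) ∨
      (∃ B ∈ Q, ∃ T : Finset (Finset α), IsCollection T ∧ 2 ≤ T.card ∧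
        T.sup id = B ∧ (∑ B' ∈ T, v B') > v B) :=
  strictlyDcStable_merge_or_split_general v P hP hstab Q hQ hne
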